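/- Let G and G' be achievement positional games on disjoint vertex sets. If o(G)=L and o(G')∈{L, L^-}, then o(G∪G')=L; in particular Left has a winning strategy on G∪G' as second player. -/

import Mathlib

namespace APG

/-- The two players: Left and Right. -/
inductive Player : Type
  | L : Player
  | R : Player
deriving DecidableEq, Repr

/-- The opponent of a player. -/
def Player.other : Player → Player
  | .L => .R
  | .R => .L

/-- An achievement positional game: a finite vertex set together with the set of
blue edges (Left's winning sets) and the set of red edges (Right's winning sets). -/
structure Game : Type where
  V : Finset ℕ
  EL : Finset (Finset ℕ)
  ER : Finset (Finset ℕ)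

/-- The edges are nonempty subsets of the vertex set. -/
def WellFormed (G : Game) : Prop :=
  (∀ e ∈ G.EL, e ⊆ G.V ∧ e.Nonempty) ∧ (∀ e ∈ G.ER, e ⊆ G.V ∧ e.Nonempty)

/-- The winning sets of a given player. -/
def Game.edges (G : Game) : Player → Finset (Finset ℕ)
  | .L => G.EL
  | .R => G.ER

/-- The player who makes the `i`-th move (0-indexed) when `s` moves first. -/
def mover (s : Player) (i : ℕ) : Player := if i % 2 = 0 then s else s.other

/-- The set of vertices picked by player `p` along the history `h`
(the chronological list of the moves played so far), when `s` moved first. -/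
def picked (s p : Player) (h : List ℕ) : Finset ℕ :=
  ((Finset.range h.length).filter fun i => mover s i = p).image fun i => h.getD i 0

/-- The set `S` of picked vertices fills some edge of `E`. -/
def fills (E : Finset (Finset ℕ)) (S : Finset ℕ) : Prop := ∃ e ∈ E, e ⊆ S

/-- The game is over: some player has picked all the vertices of one of their edges. -/
def ended (G : Game) (s : Player) (h : List ℕ) : Prop :=
  fills G.EL (picked s .L h) ∨ fills G.ER (picked s .R h)

/-- `h` is a legal history: no vertex is picked twice, every picked vertex belongs to
the board, and no move is made after the game has ended. -/
def ValidHist (G : Game) (s : Player) (h : List ℕ) : Prop :=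
  h.Nodup ∧ (∀ x ∈ h, x ∈ G.V) ∧ ∀ k, k < h.length → ¬ ended G s (h.take k)

/-- A strategy: a map assigning to each position (history) a vertex to pick. -/
abbrev Strategy := List ℕ → ℕ

/-- Along `h`, every move of player `p` agrees with the strategy `σ`. -/
def Follows (s p : Player) (σ : Strategy) (h : List ℕ) : Prop :=
  ∀ k, k < h.length → mover s k = p → h.getD k 0 = σ (h.take k)

/-- A finished play: either the game has ended or all vertices have been picked. -/
def Complete (G : Game) (s : Player) (h : List ℕ) : Prop :=
  ended G s h ∨ h.length = G.V.card

/-- The strategy `σ` of player `p` always suggests a legal move (an unpicked vertex)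
whenever the game is not over and it is `p`'s turn. -/
def Legal (G : Game) (s p : Player) (σ : Strategy) : Prop :=
  ∀ h, ValidHist G s h → Follows s p σ h → ¬ ended G s h → h.length < G.V.card →
    mover s h.length = p → σ h ∈ G.V ∧ σ h ∉ h

/-- Player `p` has a winning strategy on `G` when `s` moves first: following it,
every finished play ends with `p` having filled one of their edges (and, the game
having ended right there, the opponent has not filled an edge first). -/
def WinsAs (G : Game) (s p : Player) : Prop :=
  ∃ σ : Strategy, Legal G s p σ ∧
    ∀ h, ValidHist G s h → Follows s p σ h → Complete G s h →
      fills (G.edges p) (picked s p h)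

/-- Player `p` has a non-losing strategy on `G` when `s` moves first: following it,
the opponent never fills one of their edges. -/
def NonLosingAs (G : Game) (s p : Player) : Prop :=
  ∃ σ : Strategy, Legal G s p σ ∧
    ∀ h, ValidHist G s h → Follows s p σ h → Complete G s h →
      ¬ fills (G.edges p.other) (picked s p.other h)

/-- The possible results of the game, for a fixed starting player. -/
inductive Result : Type
  | Lwin : Result
  | draw : Result
  | Rwin : Result
deriving DecidableEq, Repr

/-- The result of `G` with optimal play, when `s` moves first, is `r`:
a win for a player means that player has a winning strategy, a draw means
both players have non-losing strategies. -/
def resultIs (G : Game) (s : Player) : Result → Prop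
  | .Lwin => WinsAs G s .L
  | .Rwin => WinsAs G s .R
  | .draw => NonLosingAs G s .L ∧ NonLosingAs G s .R

/-- An outcome: the pair of results with optimal play
(when Left starts, when Right starts). -/
abbrev Outcome := Result × Result

/-- `G` has outcome `o`. -/
def hasOutcome (G : Game) (o : Outcome) : Prop :=
  resultIs G .L o.1 ∧ resultIs G .R o.2

/-- Numerical value of a result, from Left's point of view:
Right wins < draw < Left wins. -/
def Result.val : Result → ℕ
  | .Rwin => 0
  | .draw => 1
  | .Lwin => 2

/-- The partial order `≤_L` on outcomes, comparing both components simultaneously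
from Left's point of view. -/
def outLE (o o' : Outcome) : Prop := o.1.val ≤ o'.1.val ∧ o.2.val ≤ o'.2.val

def oL : Outcome := (.Lwin, .Lwin)
def oLminus : Outcome := (.Lwin, .draw)
def oN : Outcome := (.Lwin, .Rwin)
def oD : Outcome := (.draw, .draw)
def oRminus : Outcome := (.draw, .Rwin)
def oR : Outcome := (.Rwin, .Rwin)

/-- The updated game `G_u` after Left has picked `u`. -/
def subL (G : Game) (u : ℕ) : Game where
  V := G.V.erase u
  EL := G.EL.image fun e => e.erase u
  ER := G.ER.filter fun e => u ∉ e

/-- The updated game `G^u` after Right has picked `u`. -/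
def subR (G : Game) (u : ℕ) : Game where
  V := G.V.erase u
  EL := G.EL.filter fun e => u ∉ e
  ER := G.ER.image fun e => e.erase u

/-- The updated game `G_u^v` after Left has picked `u` and Right has picked `v`. -/
def updLR (G : Game) (u v : ℕ) : Game where
  V := (G.V.erase u).erase v
  EL := (G.EL.filter fun e => v ∉ e).image fun e => e.erase u
  ER := (G.ER.filter fun e => u ∉ e).image fun e => e.erase v

/-- The disjoint union of two games. -/
def gunion (G G' : Game) : Game where
  V := G.V ∪ G'.V
  EL := G.EL ∪ G'.EL
  ER := G.ER ∪ G'.ER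

/-!
Strategies are replaced by their backward-induction form on residual games (`ForcesWin`,
`ForcesNoLoss`). On `G ∪ G'` with Right to move, Left answers every Right move in the
component where it was played: in `G` by a winning strategy for Left moving second, in `G'`
by a non-losing one. Right never completes a red edge of `G'`, and Left completes a blue
edge of `G` unless `G'` runs out first; then Left is to move in what is left of `G`, which
Left still wins because an extra vertex never hurts in an achievement game. The same
monotonicity gives the win of Left moving first.
-/

attribute [ext] Game

@[simp] theorem Player.other_other (p : Player) : p.other.other = p := by cases p <;> rfl

@[simp] theorem Player.other_ne (p : Player) : p.other ≠ p := by cases p <;> simp [Player.other]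

@[simp] theorem Player.ne_other (p : Player) : p ≠ p.other := p.other_ne.symm

theorem Player.eq_or_eq_other (a b : Player) : a = b ∨ a = b.other := by
  cases a <;> cases b <;> simp [Player.other]

@[simp] theorem mover_zero (s : Player) : mover s 0 = s := by simp [mover]

theorem mover_succ (s : Player) (k : ℕ) : mover s (k + 1) = mover s.other k := by
  rcases Nat.mod_two_eq_zero_or_one k with hk | hk <;> simp [mover, Nat.add_mod, hk]

section Picked

variable {s p : Player} {x y : ℕ} {l : List ℕ} {E : Finset (Finset ℕ)} {S T : Finset ℕ}

theorem mem_picked : y ∈ picked s p l ↔ ∃ i < l.length, mover s i = p ∧ l.getD i 0 = y := by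
  simp [picked, and_assoc]

@[simp] theorem picked_nil (s p : Player) : picked s p [] = ∅ := by
  simp [picked]

theorem picked_cons (s p : Player) (x : ℕ) (l : List ℕ) :
    picked s p (x :: l) =
      if s = p then insert x (picked s.other p l) else picked s.other p l := by
  ext y
  simp only [mem_picked, List.length_cons, Nat.exists_lt_succ_left, mover_zero, mover_succ,
    List.getD_cons_zero, List.getD_cons_succ]
  split_ifs with hsp <;> simp [mem_picked, hsp, eq_comm]

theorem picked_cons_self (s : Player) (x : ℕ) (l : List ℕ) :
    picked s s (x :: l) = insert x (picked s.other s l) := by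
  rw [picked_cons, if_pos rfl]

theorem picked_cons_other (s : Player) (x : ℕ) (l : List ℕ) :
    picked s s.other (x :: l) = picked s.other s.other l := by
  rw [picked_cons, if_neg s.ne_other]

theorem picked_singleton_self (s : Player) (x : ℕ) : picked s s [x] = {x} := by
  rw [picked_cons_self, picked_nil]
  rfl

theorem picked_singleton_of_ne (hps : p ≠ s) (x : ℕ) : picked s p [x] = ∅ := by
  rw [picked_cons, if_neg hps.symm, picked_nil]

theorem mem_of_mem_picked (hy : y ∈ picked s p l) : y ∈ l := by
  obtain ⟨i, hi, -, rfl⟩ := mem_picked.1 hy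
  rw [List.getD_eq_getElem l 0 hi]
  exact List.getElem_mem _

theorem fills_mono (hST : S ⊆ T) (hf : fills E S) : fills E T := by
  obtain ⟨e, he, hes⟩ := hf
  exact ⟨e, he, hes.trans hST⟩

theorem fills_image_erase : fills (E.image fun e => e.erase x) S ↔ fills E (insert x S) := by
  simp only [fills, Finset.mem_image, exists_exists_and_eq_and, Finset.subset_insert_iff]

theorem fills_filter_of_notMem (hx : x ∉ S) :
    fills (E.filter fun e => x ∉ e) S ↔ fills E S := by
  simp only [fills, Finset.mem_filter]
  exact exists_congr fun e => ⟨fun ⟨⟨he, _⟩, hes⟩ => ⟨he, hes⟩,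
    fun ⟨he, hes⟩ => ⟨⟨he, fun hxe => hx (hes hxe)⟩, hes⟩⟩

end Picked

def subP : Player → Game → ℕ → Game
  | .L => subL
  | .R => subR

/-- In a residual game, an emptied edge of `p` is one that `p` has completed. -/
def Won (G : Game) (p : Player) : Prop := fills (G.edges p) ∅

section Residual

variable {G : Game} {p q : Player} {x y : ℕ}

@[simp] theorem subP_V (p : Player) (G : Game) (x : ℕ) : (subP p G x).V = G.V.erase x := by
  cases p <;> rfl

theorem subP_edges_self (p : Player) (G : Game) (x : ℕ) :
    (subP p G x).edges p = (G.edges p).image fun e => e.erase x := by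
  cases p <;> rfl

theorem subP_edges_of_ne (hqp : q ≠ p) (G : Game) (x : ℕ) :
    (subP p G x).edges q = (G.edges q).filter fun e => x ∉ e := by
  cases p <;> cases q <;> first | rfl | exact absurd rfl hqp

theorem card_subP_lt (hx : x ∈ G.V) (p : Player) : (subP p G x).V.card < G.V.card := by
  rw [subP_V]
  exact Finset.card_erase_lt_of_mem hx

theorem subP_V_subset : (subP p G x).V ⊆ G.V := by
  simp [Finset.erase_subset]

theorem card_subP_subP_lt (hx : x ∈ G.V) (y : ℕ) :
    (subP p (subP q G x) y).V.card < G.V.card :=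
  (Finset.card_le_card subP_V_subset).trans_lt (card_subP_lt hx q)

theorem won_subP_self_iff : Won (subP p G x) p ↔ fills (G.edges p) {x} := by
  rw [Won, subP_edges_self, fills_image_erase]
  rfl

theorem Won.subP_self (hw : Won G p) (x : ℕ) : Won (subP p G x) p :=
  won_subP_self_iff.2 (fills_mono (Finset.empty_subset _) hw)

theorem fills_of_fills_subP {S : Finset ℕ} (hqp : q ≠ p) (hf : fills ((subP p G x).edges q) S) :
    fills (G.edges q) S := by
  rw [subP_edges_of_ne hqp] at hf
  obtain ⟨e, he, hes⟩ := hf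
  exact ⟨e, (Finset.mem_filter.1 he).1, hes⟩

theorem Won.of_subP (hqp : q ≠ p) (hw : Won (subP p G x) q) : Won G q :=
  fills_of_fills_subP hqp hw

theorem Won.ended (hw : Won G q) (s : Player) (h : List ℕ) : ended G s h := by
  cases q
  · exact Or.inl (fills_mono (Finset.empty_subset _) hw)
  · exact Or.inr (fills_mono (Finset.empty_subset _) hw)

theorem WellFormed.edges (hwf : WellFormed G) (p : Player) :
    ∀ e ∈ G.edges p, e ⊆ G.V ∧ e.Nonempty := by
  cases p
  · exact hwf.1
  · exact hwf.2

theorem WellFormed.not_fills_empty (hwf : WellFormed G) (p : Player) :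
    ¬ fills (G.edges p) ∅ := by
  rintro ⟨e, he, hes⟩
  obtain ⟨a, ha⟩ := (hwf.edges p e he).2
  exact Finset.notMem_empty a (hes ha)

theorem WellFormed.not_won (hwf : WellFormed G) (p : Player) : ¬ Won G p :=
  hwf.not_fills_empty p

theorem WellFormed.not_ended_nil (hwf : WellFormed G) {s : Player} : ¬ ended G s [] := by
  rintro (hf | hf) <;> rw [picked_nil] at hf
  · exact hwf.not_fills_empty .L hf
  · exact hwf.not_fills_empty .R hf

theorem WellFormed.residual (hwf : WellFormed G) (hnw : ¬ Won (subP p G x) p) :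
    WellFormed (subP p G x) := by
  have hedges : ∀ q, ∀ e ∈ (subP p G x).edges q, e ⊆ (subP p G x).V ∧ e.Nonempty := by
    intro q e he
    rw [subP_V]
    rcases eq_or_ne q p with rfl | hqp
    · rw [subP_edges_self] at he
      obtain ⟨e₀, he₀, rfl⟩ := Finset.mem_image.1 he
      refine ⟨Finset.erase_subset_erase _ (hwf.edges q e₀ he₀).1,
        Finset.nonempty_iff_ne_empty.2 fun hemp => hnw ⟨_, by rwa [subP_edges_self], hemp.le⟩⟩
    · rw [subP_edges_of_ne hqp] at he
      obtain ⟨he, hxe⟩ := Finset.mem_filter.1 he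
      exact ⟨fun a ha => Finset.mem_erase.2 ⟨fun hax => hxe (hax ▸ ha), (hwf.edges q e he).1 ha⟩,
        (hwf.edges q e he).2⟩
  exact ⟨hedges .L, hedges .R⟩

theorem subP_comm (hxy : x ≠ y) (p q : Player) (G : Game) :
    subP p (subP q G y) x = subP q (subP p G x) y := by
  cases p <;> cases q <;> ext1 <;>
    simp [subP, subL, subR, Finset.erase_right_comm, Finset.filter_comm, Finset.image_image,
      Function.comp_def, Finset.filter_image, hxy, hxy.symm]

end Residual

/-- Backward-induction form of `WinsAs`, positions being residual games. -/
def ForcesWin (G : Game) (p t : Player) : Prop :=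
  if t = p then ∃ x, ∃ _ : x ∈ G.V, Won (subP t G x) p ∨ ForcesWin (subP t G x) p t.other
  else G.V.Nonempty ∧ ∀ x ∈ G.V, ¬ Won (subP t G x) t ∧ ForcesWin (subP t G x) p t.other
termination_by G.V.card
decreasing_by all_goals exact card_subP_lt (by assumption) t

/-- Backward-induction form of `NonLosingAs`. -/
def ForcesNoLoss (G : Game) (p t : Player) : Prop :=
  if t = p then
    G.V = ∅ ∨ ∃ x, ∃ _ : x ∈ G.V, Won (subP t G x) p ∨ ForcesNoLoss (subP t G x) p t.other
  else ∀ x ∈ G.V, ¬ Won (subP t G x) t ∧ ForcesNoLoss (subP t G x) p t.other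
termination_by G.V.card
decreasing_by all_goals exact card_subP_lt (by assumption) t

section Forcing

variable {G : Game} {p t : Player}

theorem forcesWin_self_iff :
    ForcesWin G p p ↔ ∃ x ∈ G.V, Won (subP p G x) p ∨ ForcesWin (subP p G x) p p.other := by
  rw [ForcesWin]
  simp

theorem forcesWin_other_iff :
    ForcesWin G p p.other ↔ G.V.Nonempty ∧
      ∀ x ∈ G.V, ¬ Won (subP p.other G x) p.other ∧ ForcesWin (subP p.other G x) p p := by
  rw [ForcesWin, if_neg p.other_ne]
  simp

theorem forcesNoLoss_self_iff :
    ForcesNoLoss G p p ↔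
      G.V = ∅ ∨ ∃ x ∈ G.V, Won (subP p G x) p ∨ ForcesNoLoss (subP p G x) p p.other := by
  rw [ForcesNoLoss]
  simp

theorem forcesNoLoss_other_iff :
    ForcesNoLoss G p p.other ↔
      ∀ x ∈ G.V, ¬ Won (subP p.other G x) p.other ∧ ForcesNoLoss (subP p.other G x) p p := by
  rw [ForcesNoLoss, if_neg p.other_ne]
  simp

theorem ForcesWin.nonempty (h : ForcesWin G p t) : G.V.Nonempty := by
  rcases t.eq_or_eq_other p with rfl | rfl
  · obtain ⟨x, hx, -⟩ := forcesWin_self_iff.1 h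
    exact ⟨x, hx⟩
  · exact (forcesWin_other_iff.1 h).1

theorem ForcesWin.forcesNoLoss {G : Game} {p t : Player} (h : ForcesWin G p t) :
    ForcesNoLoss G p t := by
  obtain rfl | rfl := t.eq_or_eq_other p
  · obtain ⟨x, hx, hd⟩ := forcesWin_self_iff.1 h
    exact forcesNoLoss_self_iff.2
      (Or.inr ⟨x, hx, hd.imp_right fun h' => ForcesWin.forcesNoLoss h'⟩)
  · exact forcesNoLoss_other_iff.2 fun x hx =>
      (forcesWin_other_iff.1 h).2 x hx |>.imp_right fun h' => ForcesWin.forcesNoLoss h'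
termination_by G.V.card
decreasing_by all_goals exact card_subP_lt (by assumption) _

/-- An extra vertex for `p` never hurts `p`. -/
theorem ForcesWin.subP_self {G : Game} {p t : Player} {x : ℕ} (hx : x ∈ G.V)
    (h : ForcesWin G p t) :
    Won (subP p G x) p ∨ ForcesWin (subP p G x) p t := by
  refine or_iff_not_imp_left.2 fun hw => ?_
  rcases t.eq_or_eq_other p with rfl | rfl
  · obtain ⟨z, hz, hd⟩ := forcesWin_self_iff.1 h
    by_cases hzx : z = x
    · subst hzx
      obtain ⟨y, hy⟩ := (hd.resolve_left hw).nonempty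
      exact forcesWin_self_iff.2 ⟨y, hy, ForcesWin.subP_self hy (hd.resolve_left hw)⟩
    · refine forcesWin_self_iff.2 ⟨z, by simpa [hzx] using hz, ?_⟩
      rw [subP_comm hzx]
      rcases hd with hwz | hfz
      · exact Or.inl (hwz.subP_self x)
      · exact ForcesWin.subP_self (by simpa [Ne.symm hzx] using hx) hfz
  · refine forcesWin_other_iff.2 ⟨?_, fun z hz => ?_⟩
    · obtain ⟨-, hG'⟩ := forcesWin_other_iff.1 h
      simpa using ((hG' x hx).2.nonempty)
    · obtain ⟨hzx, hz⟩ := Finset.mem_erase.1 (by simpa using hz)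
      obtain ⟨hnw, hz'⟩ := (forcesWin_other_iff.1 h).2 z hz
      rw [← subP_comm (Ne.symm hzx)]
      refine ⟨fun hw' => hnw (hw'.of_subP p.other_ne), ?_⟩
      refine (ForcesWin.subP_self (by simpa [Ne.symm hzx] using hx) hz').resolve_left
        fun hw' => hw ?_
      exact won_subP_self_iff.2 (fills_of_fills_subP p.ne_other (won_subP_self_iff.1 hw'))
termination_by G.V.card
decreasing_by all_goals exact card_subP_lt (by assumption) _

theorem ForcesWin.self_of_other (h : ForcesWin G p p.other) : ForcesWin G p p := by
  obtain ⟨y, hy⟩ := h.nonempty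
  exact forcesWin_self_iff.2 ⟨y, hy, h.subP_self hy⟩

end Forcing

section Union

variable {G G' : Game} {q : Player} {x : ℕ}

theorem subP_gunion (p : Player) (G G' : Game) (x : ℕ) :
    subP p (gunion G G') x = gunion (subP p G x) (subP p G' x) := by
  cases p <;> ext1 <;>
    simp [subP, subL, subR, gunion, Finset.erase_union_distrib, Finset.image_union,
      Finset.filter_union]

theorem WellFormed.subP_eq_self (hwf : WellFormed G) (hx : x ∉ G.V) (p : Player) :
    subP p G x = G := by
  have hxe : ∀ q, ∀ e ∈ G.edges q, x ∉ e := fun q e he hxe => hx ((hwf.edges q e he).1 hxe)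
  have himg : ∀ q, ((G.edges q).image fun e => e.erase x) = G.edges q := fun q => by
    conv_rhs => rw [← Finset.image_id (s := G.edges q)]
    exact Finset.image_congr fun e he => Finset.erase_eq_of_notMem (hxe q e he)
  have hflt : ∀ q, ((G.edges q).filter fun e => x ∉ e) = G.edges q :=
    fun q => Finset.filter_true_of_mem (hxe q)
  cases p <;> ext1
  all_goals first
    | exact Finset.erase_eq_of_notMem hx
    | exact himg .L | exact himg .R | exact hflt .L | exact hflt .R

theorem gunion_edges (G G' : Game) (q : Player) :
    (gunion G G').edges q = G.edges q ∪ G'.edges q := by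
  cases q <;> rfl

theorem won_gunion_iff : Won (gunion G G') q ↔ Won G q ∨ Won G' q := by
  simp [Won, gunion_edges, fills, or_and_right, exists_or]

theorem gunion_eq_left (hwf' : WellFormed G') (hV : G'.V = ∅) : gunion G G' = G := by
  have hE : ∀ q, G'.edges q = ∅ := fun q => Finset.eq_empty_of_forall_notMem fun e he => by
    obtain ⟨hsub, a, ha⟩ := hwf'.edges q e he
    simpa [hV] using hsub ha
  ext1
  · simp [gunion, hV]
  · simp [gunion, show G'.EL = ∅ from hE .L]
  · simp [gunion, show G'.ER = ∅ from hE .R]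

theorem WellFormed.union (hwf : WellFormed G) (hwf' : WellFormed G') :
    WellFormed (gunion G G') := by
  have hedges : ∀ q, ∀ e ∈ (gunion G G').edges q, e ⊆ (gunion G G').V ∧ e.Nonempty := by
    intro q e he
    rcases Finset.mem_union.1 (gunion_edges G G' q ▸ he) with he | he
    · exact (hwf.edges q e he).imp_left (·.trans Finset.subset_union_left)
    · exact (hwf'.edges q e he).imp_left (·.trans Finset.subset_union_right)
  exact ⟨hedges .L, hedges .R⟩

theorem forcesWin_gunion {G G' : Game} {p : Player} (hwf : WellFormed G) (hwf' : WellFormed G')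
    (hdisj : Disjoint G.V G'.V) (hA : ForcesWin G p p.other) (hB : ForcesNoLoss G' p p.other) :
    ForcesWin (gunion G G') p p.other := by
  refine forcesWin_other_iff.2 ⟨hA.nonempty.mono Finset.subset_union_left, fun x hx => ?_⟩
  rw [subP_gunion, won_gunion_iff, not_or]
  rcases Finset.mem_union.1 hx with hxG | hxG'
  · obtain ⟨hnw, hA'⟩ := (forcesWin_other_iff.1 hA).2 x hxG
    rw [hwf'.subP_eq_self (Finset.disjoint_left.1 hdisj hxG)]
    refine ⟨⟨hnw, hwf'.not_won _⟩, ?_⟩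
    obtain ⟨y, hy, hd⟩ := forcesWin_self_iff.1 hA'
    refine forcesWin_self_iff.2 ⟨y, Finset.mem_union_left _ hy, ?_⟩
    rw [subP_gunion, hwf'.subP_eq_self (Finset.disjoint_left.1 hdisj (subP_V_subset hy)),
      won_gunion_iff]
    by_cases hw : Won (subP p (subP p.other G x) y) p
    · exact Or.inl (Or.inl hw)
    · exact Or.inr (forcesWin_gunion ((hwf.residual hnw).residual hw) hwf'
        (hdisj.mono_left (subP_V_subset.trans subP_V_subset)) (hd.resolve_left hw) hB)
  · obtain ⟨hnw, hB'⟩ := forcesNoLoss_other_iff.1 hB x hxG'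
    rw [hwf.subP_eq_self (Finset.disjoint_right.1 hdisj hxG')]
    refine ⟨⟨hwf.not_won _, hnw⟩, ?_⟩
    rcases forcesNoLoss_self_iff.1 hB' with hemp | ⟨y, hy, hd⟩
    · rw [gunion_eq_left (hwf'.residual hnw) hemp]
      exact hA.self_of_other
    refine forcesWin_self_iff.2 ⟨y, Finset.mem_union_right _ hy, ?_⟩
    rw [subP_gunion, hwf.subP_eq_self (Finset.disjoint_right.1 hdisj (subP_V_subset hy)),
      won_gunion_iff]
    by_cases hw : Won (subP p (subP p.other G' x) y) p
    · exact Or.inl (Or.inr hw)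
    · exact Or.inr (forcesWin_gunion hwf ((hwf'.residual hnw).residual hw)
        (hdisj.mono_right (subP_V_subset.trans subP_V_subset)) hA (hd.resolve_left hw))
termination_by G.V.card + G'.V.card
decreasing_by
  · have := card_subP_subP_lt (p := p) (q := p.other) hxG y
    omega
  · have := card_subP_subP_lt (p := p) (q := p.other) hxG' y
    omega

end Union

section Plays

variable {G : Game} {s p : Player} {x : ℕ} {l : List ℕ} {σ : Strategy}

theorem fills_picked_cons (hxl : x ∉ l) (q : Player) :
    fills ((subP s G x).edges q) (picked s.other q l) ↔
      fills (G.edges q) (picked s q (x :: l)) := by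
  rcases q.eq_or_eq_other s with rfl | rfl
  · rw [subP_edges_self, picked_cons_self, fills_image_erase]
  · rw [subP_edges_of_ne s.other_ne, picked_cons_other,
      fills_filter_of_notMem fun hx => hxl (mem_of_mem_picked hx)]

theorem ended_cons (hxl : x ∉ l) : ended (subP s G x) s.other l ↔ ended G s (x :: l) :=
  or_congr (fills_picked_cons hxl .L) (fills_picked_cons hxl .R)

theorem validHist_nil (G : Game) (s : Player) : ValidHist G s [] := by
  simp [ValidHist]

theorem validHist_cons_iff (h0 : ¬ ended G s []) :
    ValidHist G s (x :: l) ↔ x ∈ G.V ∧ ValidHist (subP s G x) s.other l := by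
  simp only [ValidHist, List.nodup_cons, List.forall_mem_cons, List.length_cons,
    Nat.forall_lt_succ_left, List.take_zero, List.take_succ_cons, subP_V, Finset.mem_erase]
  constructor
  · rintro ⟨⟨hxl, hnd⟩, ⟨hx, hl⟩, -, hend⟩
    refine ⟨hx, hnd, fun y hy => ⟨ne_of_mem_of_not_mem hy hxl, hl y hy⟩, fun k hk => ?_⟩
    rw [ended_cons fun h => hxl (List.mem_of_mem_take h)]
    exact hend k hk
  · rintro ⟨hx, hnd, hl, hend⟩
    have hxl : x ∉ l := fun h => (hl x h).1 rfl
    refine ⟨⟨hxl, hnd⟩, ⟨hx, fun y hy => (hl y hy).2⟩, h0, fun k hk => ?_⟩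
    rw [← ended_cons fun h => hxl (List.mem_of_mem_take h)]
    exact hend k hk

theorem follows_nil (s p : Player) (σ : Strategy) : Follows s p σ [] := by
  simp [Follows]

theorem follows_cons_iff :
    Follows s p σ (x :: l) ↔ (s = p → x = σ []) ∧ Follows s.other p (fun l' => σ (x :: l')) l := by
  simp only [Follows, List.length_cons, Nat.forall_lt_succ_left, mover_zero, mover_succ,
    List.getD_cons_zero, List.getD_cons_succ, List.take_zero, List.take_succ_cons]

theorem complete_cons_iff (hx : x ∈ G.V) (hxl : x ∉ l) :
    Complete G s (x :: l) ↔ Complete (subP s G x) s.other l := by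
  have := Finset.card_pos.2 ⟨x, hx⟩
  rw [Complete, Complete, ← ended_cons hxl, subP_V, Finset.card_erase_of_mem hx,
    List.length_cons]
  exact or_congr_right (by omega)

theorem Legal.residual (hσ : Legal G s p σ) (h0 : ¬ ended G s []) (hx : x ∈ G.V)
    (hbase : s = p → x = σ []) :
    Legal (subP s G x) s.other p (fun l => σ (x :: l)) := by
  intro l hv hf hne hlen hm
  have hv' := (validHist_cons_iff h0).2 ⟨hx, hv⟩
  have hxl : x ∉ l := (List.nodup_cons.1 hv'.1).1
  rw [subP_V, Finset.card_erase_of_mem hx] at hlen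
  obtain ⟨hmem, hnot⟩ := hσ (x :: l) hv' (follows_cons_iff.2 ⟨hbase, hf⟩)
    (by rwa [← ended_cons hxl]) (by rw [List.length_cons]; omega)
    (by rwa [List.length_cons, mover_succ])
  simp only [List.mem_cons, not_or] at hnot
  exact ⟨by simpa [hmem] using hnot.1, hnot.2⟩

end Plays

section Strategies

variable {G : Game} {s p : Player} {x : ℕ} {σ : Strategy}

theorem winsAs_residual (hwf : WellFormed G) (hx : x ∈ G.V) (hσ : Legal G s p σ)
    (hwin : ∀ h, ValidHist G s h → Follows s p σ h → Complete G s h →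
      fills (G.edges p) (picked s p h))
    (hbase : s = p → x = σ []) :
    WinsAs (subP s G x) s.other p := by
  refine ⟨_, hσ.residual hwf.not_ended_nil hx hbase, fun l hv hf hc => ?_⟩
  have hv' := (validHist_cons_iff hwf.not_ended_nil).2 ⟨hx, hv⟩
  have hxl : x ∉ l := (List.nodup_cons.1 hv'.1).1
  exact (fills_picked_cons hxl p).2
    (hwin _ hv' (follows_cons_iff.2 ⟨hbase, hf⟩) ((complete_cons_iff hx hxl).2 hc))

theorem nonLosingAs_residual (hwf : WellFormed G) (hx : x ∈ G.V) (hσ : Legal G s p σ)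
    (hnl : ∀ h, ValidHist G s h → Follows s p σ h → Complete G s h →
      ¬ fills (G.edges p.other) (picked s p.other h))
    (hbase : s = p → x = σ []) :
    NonLosingAs (subP s G x) s.other p := by
  refine ⟨_, hσ.residual hwf.not_ended_nil hx hbase, fun l hv hf hc => ?_⟩
  have hv' := (validHist_cons_iff hwf.not_ended_nil).2 ⟨hx, hv⟩
  have hxl : x ∉ l := (List.nodup_cons.1 hv'.1).1
  exact (fills_picked_cons hxl p.other).not.2
    (hnl _ hv' (follows_cons_iff.2 ⟨hbase, hf⟩) ((complete_cons_iff hx hxl).2 hc))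

theorem validHist_singleton (hwf : WellFormed G) (hx : x ∈ G.V) : ValidHist G s [x] :=
  (validHist_cons_iff hwf.not_ended_nil).2 ⟨hx, validHist_nil _ _⟩

theorem follows_singleton_of_ne (hsp : s ≠ p) : Follows s p σ [x] :=
  follows_cons_iff.2 ⟨fun h => absurd h hsp, follows_nil _ _ _⟩

theorem complete_singleton_of_won (hw : Won (subP s G x) s) : Complete G s [x] :=
  Or.inl ((ended_cons List.not_mem_nil).1 (hw.ended _ _))

theorem WinsAs.nonempty (hwf : WellFormed G) (h : WinsAs G s p) : G.V.Nonempty := by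
  obtain ⟨σ, -, hwin⟩ := h
  refine Finset.nonempty_iff_ne_empty.2 fun hV => hwf.not_fills_empty p ?_
  simpa using hwin [] (validHist_nil G s) (follows_nil s p σ) (Or.inr (by simp [hV]))

theorem WinsAs.forcesWin {G : Game} {s p : Player} (hwf : WellFormed G) (h : WinsAs G s p) :
    ForcesWin G p s := by
  have hne := h.nonempty hwf
  obtain ⟨σ, hσ, hwin⟩ := h
  rcases s.eq_or_eq_other p with rfl | rfl
  · obtain ⟨hx, -⟩ := hσ [] (validHist_nil G s) (follows_nil s s σ) hwf.not_ended_nil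
      (by simpa using hne.card_pos) (mover_zero s)
    refine forcesWin_self_iff.2 ⟨σ [], hx, or_iff_not_imp_left.2 fun hw => ?_⟩
    exact WinsAs.forcesWin (hwf.residual hw) (winsAs_residual hwf hx hσ hwin fun _ => rfl)
  · refine forcesWin_other_iff.2 ⟨hne, fun x hx => ?_⟩
    have hnw : ¬ Won (subP p.other G x) p.other := fun hw => hwf.not_fills_empty p <| by
      simpa [picked_singleton_of_ne p.ne_other] using hwin [x] (validHist_singleton hwf hx)
        (follows_singleton_of_ne p.other_ne) (complete_singleton_of_won hw)
    have := WinsAs.forcesWin (hwf.residual hnw)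
      (winsAs_residual hwf hx hσ hwin fun h => absurd h p.other_ne)
    exact ⟨hnw, by simpa using this⟩
termination_by G.V.card
decreasing_by all_goals exact card_subP_lt (by assumption) _

theorem NonLosingAs.forcesNoLoss {G : Game} {s p : Player} (hwf : WellFormed G)
    (h : NonLosingAs G s p) : ForcesNoLoss G p s := by
  obtain ⟨σ, hσ, hnl⟩ := h
  rcases s.eq_or_eq_other p with rfl | rfl
  · refine forcesNoLoss_self_iff.2 (G.V.eq_empty_or_nonempty.imp_right fun hne => ?_)
    obtain ⟨hx, -⟩ := hσ [] (validHist_nil G s) (follows_nil s s σ) hwf.not_ended_nil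
      (by simpa using hne.card_pos) (mover_zero s)
    refine ⟨σ [], hx, or_iff_not_imp_left.2 fun hw => ?_⟩
    exact NonLosingAs.forcesNoLoss (hwf.residual hw)
      (nonLosingAs_residual hwf hx hσ hnl fun _ => rfl)
  · refine forcesNoLoss_other_iff.2 fun x hx => ?_
    have hnw : ¬ Won (subP p.other G x) p.other := fun hw =>
      hnl [x] (validHist_singleton hwf hx) (follows_singleton_of_ne p.other_ne)
        (complete_singleton_of_won hw)
        (by rwa [picked_singleton_self, ← won_subP_self_iff])
    have := NonLosingAs.forcesNoLoss (hwf.residual hnw)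
      (nonLosingAs_residual hwf hx hσ hnl fun h => absurd h p.other_ne)
    exact ⟨hnw, by simpa using this⟩
termination_by G.V.card
decreasing_by all_goals exact card_subP_lt (by assumption) _

end Strategies

open Classical in
noncomputable def forcingStrategy (G : Game) (p t : Player) : Strategy
  | [] => if h : ∃ x ∈ G.V, Won (subP t G x) p ∨ ForcesWin (subP t G x) p t.other
      then h.choose else 0
  | x :: l => forcingStrategy (subP t G x) p t.other l

section ForcingStrategy

variable {G : Game} {s p : Player} {x : ℕ}

theorem forcingStrategy_nil_spec (h : ForcesWin G p p) :
    forcingStrategy G p p [] ∈ G.V ∧ (Won (subP p G (forcingStrategy G p p [])) p ∨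
      ForcesWin (subP p G (forcingStrategy G p p [])) p p.other) := by
  have hc := forcesWin_self_iff.1 h
  rw [forcingStrategy, dif_pos hc]
  exact hc.choose_spec

theorem ForcesWin.residual_of_follows (hwf : WellFormed G) (h : ForcesWin G p s)
    (hx : x ∈ G.V) (hbase : s = p → x = forcingStrategy G p s []) :
    Won (subP s G x) p ∨ (WellFormed (subP s G x) ∧ ForcesWin (subP s G x) p s.other) := by
  rcases s.eq_or_eq_other p with rfl | rfl
  · have hd := (forcingStrategy_nil_spec h).2
    rw [← hbase rfl] at hd
    by_cases hw : Won (subP s G x) s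
    · exact Or.inl hw
    · exact Or.inr ⟨hwf.residual hw, hd.resolve_left hw⟩
  · obtain ⟨hnw, h'⟩ := (forcesWin_other_iff.1 h).2 x hx
    exact Or.inr ⟨hwf.residual hnw, by simpa using h'⟩

theorem forcingStrategy_legal (hwf : WellFormed G)
    (h : ForcesWin G p s) : Legal G s p (forcingStrategy G p s) := by
  intro hist
  induction hist generalizing G s with
  | nil =>
    rintro - - - - rfl
    exact ⟨(forcingStrategy_nil_spec h).1, List.not_mem_nil⟩
  | cons x l ih =>
    intro hv hf hne hlen hm
    obtain ⟨hx, hv'⟩ := (validHist_cons_iff hwf.not_ended_nil).1 hv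
    obtain ⟨hbase, hf'⟩ := follows_cons_iff.1 hf
    have hxl : x ∉ l := (List.nodup_cons.1 hv.1).1
    rw [← ended_cons hxl] at hne
    rcases h.residual_of_follows hwf hx hbase with hw | ⟨hwf', h'⟩
    · exact absurd (hw.ended _ _) hne
    rw [List.length_cons, mover_succ] at hm
    rw [List.length_cons] at hlen
    obtain ⟨hmem, hnot⟩ := ih hwf' h' hv' hf' hne
      (by rw [subP_V, Finset.card_erase_of_mem hx]; omega) hm
    rw [subP_V, Finset.mem_erase] at hmem
    exact ⟨hmem.2, by simpa [forcingStrategy, hmem.1] using hnot⟩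

theorem forcingStrategy_wins (hwf : WellFormed G)
    (h : ForcesWin G p s) (hist : List ℕ) (hv : ValidHist G s hist)
    (hf : Follows s p (forcingStrategy G p s) hist) (hc : Complete G s hist) :
    fills (G.edges p) (picked s p hist) := by
  induction hist generalizing G s with
  | nil =>
    rcases hc with hend | hlen
    · exact absurd hend hwf.not_ended_nil
    · exact absurd hlen.symm h.nonempty.card_pos.ne'
  | cons x l ih =>
    obtain ⟨hx, hv'⟩ := (validHist_cons_iff hwf.not_ended_nil).1 hv
    obtain ⟨hbase, hf'⟩ := follows_cons_iff.1 hf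
    have hxl : x ∉ l := (List.nodup_cons.1 hv.1).1
    rw [← fills_picked_cons hxl]
    rcases h.residual_of_follows hwf hx hbase with hw | ⟨hwf', h'⟩
    · exact fills_mono (Finset.empty_subset _) hw
    · exact ih hwf' h' hv' hf' ((complete_cons_iff hx hxl).1 hc)

theorem ForcesWin.winsAs (hwf : WellFormed G) (h : ForcesWin G p s) : WinsAs G s p :=
  ⟨_, forcingStrategy_legal hwf h, forcingStrategy_wins hwf h⟩

end ForcingStrategy

/-- If `o(G) = L` and `o(G') ∈ {L, L⁻}`, then `o(G ∪ G') = L`; in particular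
Left has a winning strategy on `G ∪ G'` as second player. -/
theorem union_L_Lminus (G G' : Game) (hG : WellFormed G) (hG' : WellFormed G')
    (hdisj : Disjoint G.V G'.V)
    (hGo : hasOutcome G oL) (hG'o : hasOutcome G' oL ∨ hasOutcome G' oLminus) :
    hasOutcome (gunion G G') oL ∧ WinsAs (gunion G G') .R .L := by
  have hA : ForcesWin G .L .R := WinsAs.forcesWin hG hGo.2
  have hB : ForcesNoLoss G' .L .R := by
    rcases hG'o with hL | hLminus
    · exact (WinsAs.forcesWin hG' hL.2).forcesNoLoss
    · exact NonLosingAs.forcesNoLoss hG' hLminus.2.1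
  have hU : ForcesWin (gunion G G') .L .R := forcesWin_gunion hG hG' hdisj hA hB
  have hwfU := hG.union hG'
  have hRstart : WinsAs (gunion G G') .R .L := hU.winsAs hwfU
  exact ⟨⟨hU.self_of_other.winsAs hwfU, hRstart⟩, hRstart⟩

end APG
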